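/- Let φ: ℝ^d → ℝ^D satisfy φ(v)ᵀφ(w) = (vᵀw)^p, let γ_1, …, γ_i be scalars, and set b_{ij} = Π_{m=j+1}^i γ_m, S_i = Σ_{j=1}^i b_{ij} V_j φ(K_j)ᵀ, Z_i = Σ_{j=1}^i b_{ij} φ(K_j)ᵀ. If Σ_{k=1}^i b_{ik}(Q_iᵀK_k)^p ≠ 0, then Σ_{j=1}^i b_{ij}(Q_iᵀK_j)^p V_j / Σ_{k=1}^i b_{ik}(Q_iᵀK_k)^p = (S_i φ(Q_i)) / (Z_i φ(Q_i)). -/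

import Mathlib

open Finset

theorem gated_sympow_recurrent_equiv {d D : ℕ} (p : ℕ)
    (φ : (Fin d → ℝ) → (Fin D → ℝ))
    (hφ : ∀ v w, dotProduct (φ v) (φ w) = (dotProduct v w) ^ p)
    (γ : ℕ → ℝ)
    (Qi : Fin d → ℝ) (K V : ℕ → Fin d → ℝ) (i : ℕ) (hi : 1 ≤ i)
    (b : ℕ → ℕ → ℝ) (hb : ∀ i' j, b i' j = ∏ m ∈ Finset.Icc (j + 1) i', γ m)
    (Z : Fin D → ℝ) (hZ : Z = ∑ j ∈ Finset.Icc 1 i, b i j • φ (K j))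
    (S : Matrix (Fin d) (Fin D) ℝ)
    (hS : S = ∑ j ∈ Finset.Icc 1 i, b i j • Matrix.vecMulVec (V j) (φ (K j)))
    (hden : (∑ k ∈ Finset.Icc 1 i, b i k * (dotProduct Qi (K k)) ^ p) ≠ 0) :
    (∑ k ∈ Finset.Icc 1 i, b i k * (dotProduct Qi (K k)) ^ p)⁻¹ •
        (∑ j ∈ Finset.Icc 1 i, (b i j * (dotProduct Qi (K j)) ^ p) • V j)
      = (dotProduct Z (φ Qi))⁻¹ • S.mulVec (φ Qi) := by
  have key : ∀ (s : Finset ℕ) (f : ℕ → Fin D → ℝ) (w : Fin D → ℝ),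
      dotProduct (∑ j ∈ s, f j) w = ∑ j ∈ s, dotProduct (f j) w := by
    intro s f w
    simp only [dotProduct, Finset.sum_apply, Finset.sum_mul]
    exact Finset.sum_comm
  have hvm : ∀ (u : Fin d → ℝ) (v w : Fin D → ℝ),
      (Matrix.vecMulVec u v).mulVec w = (dotProduct v w) • u := by
    intro u v w
    funext x
    simp only [Matrix.mulVec, Matrix.vecMulVec_apply, dotProduct, Pi.smul_apply,
      smul_eq_mul, Finset.sum_mul]
    exact Finset.sum_congr rfl fun y _ => by ring
  have hZ' : dotProduct Z (φ Qi)
      = ∑ k ∈ Finset.Icc 1 i, b i k * (dotProduct Qi (K k)) ^ p := by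
    rw [hZ, key]
    refine Finset.sum_congr rfl fun k _ => ?_
    rw [smul_dotProduct, hφ, dotProduct_comm, smul_eq_mul]
  have hS' : S.mulVec (φ Qi)
      = ∑ j ∈ Finset.Icc 1 i, (b i j * (dotProduct Qi (K j)) ^ p) • V j := by
    rw [hS]
    have : (∑ j ∈ Finset.Icc 1 i,
        b i j • Matrix.vecMulVec (V j) (φ (K j))).mulVec (φ Qi)
        = ∑ j ∈ Finset.Icc 1 i,
          (b i j • Matrix.vecMulVec (V j) (φ (K j))).mulVec (φ Qi) := by
      funext x
      simp only [Matrix.mulVec, dotProduct, Matrix.sum_apply, Finset.sum_apply, Finset.sum_mul]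
      exact Finset.sum_comm
    rw [this]
    refine Finset.sum_congr rfl fun j _ => ?_
    rw [Matrix.smul_mulVec, hvm, hφ, dotProduct_comm, smul_smul]
  rw [hZ', hS']
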